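/- Let c > 1/2, C* > 0, and t* ≥ 1. There exists a time-independent constant K > 0 such that for all t ≥ t*, the quantity I₂(t) := t^{−4c} · ∫_{u=t*}^{t} ∫_{s=u}^{t} ∫_{w=s}^{t} ∫_{r=w}^{t} (r^{2c−2} · s^{2c−2} / w) · e^{−2C* r + 2C* u − C* s + C* w} dr dw ds du satisfies: I₂(t) ≤ K/t⁴ if c > 1; I₂(t) ≤ K(1 + log t)/t⁴ if c = 1; and I₂(t) ≤ K/t^{4c} if 1/2 < c < 1. -/

import Mathlib

/-!
Each of the three inner integrations is against an exponential: bounding `r ^ (2c-2)` by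
`max 1 (t ^ (2c-2))` and `1 / w` by `1 / s`, the `r`- and `w`-integrals cost only factors
`e^{-kx} / k` at their lower limits, leaving `e^{2C u} ∫_u^t g(s) e^{-2C s} ds` with
`g(s) ∝ s ^ (2c-3)`. Integrating this over `u` by parts (a Fubini argument in disguise) gives at
most `(2C)⁻¹ ∫ g`, so `I₂(t) ≤ t^{-4c} max(1, t^{2c-2}) (4C³)⁻¹ ∫_{t*}^t u^{2c-3} du`, which is
evaluated in the three regimes `c > 1`, `c = 1`, `c < 1`.
-/

/-- The quantity `I₂(t)` from Lemma 5.4: a fourfold iterated integral over the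
ordered region `t* ≤ u ≤ s ≤ w ≤ r ≤ t`, scaled by `t^{-4c}`. -/
noncomputable def I2 (c Cstar tstar t : ℝ) : ℝ :=
  t ^ (-(4 * c)) *
    ∫ u in tstar..t, ∫ s in u..t, ∫ w in s..t, ∫ r in w..t,
      (r ^ (2 * c - 2) * s ^ (2 * c - 2) / w) *
        Real.exp (-2 * Cstar * r + 2 * Cstar * u - Cstar * s + Cstar * w)

open Real Set MeasureTheory

theorem intervalIntegral.integral_mono_on_of_nonneg {f g : ℝ → ℝ} {a b : ℝ} (hab : a ≤ b)
    (hf : ∀ x ∈ Icc a b, 0 ≤ f x) (h : ∀ x ∈ Icc a b, f x ≤ g x)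
    (hg : IntervalIntegrable g volume a b) :
    ∫ x in a..b, f x ≤ ∫ x in a..b, g x := by
  rw [intervalIntegral.integral_of_le hab, intervalIntegral.integral_of_le hab]
  exact setIntegral_mono_of_nonneg (fun x hx => hf x (Ioc_subset_Icc_self hx))
    (fun x hx => h x (Ioc_subset_Icc_self hx)) hg.1

theorem integral_exp_neg_mul {k : ℝ} (hk : k ≠ 0) (a b : ℝ) :
    ∫ x in a..b, exp (-(k * x)) = (exp (-(k * a)) - exp (-(k * b))) / k := by
  have h := intervalIntegral.integral_comp_mul_left (fun x => exp (-x)) hk (a := a) (b := b)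
  simp only [intervalIntegral.integral_comp_neg, integral_exp, smul_eq_mul] at h
  rw [h]
  field_simp

theorem integral_le_of_le_mul_exp_neg {G : ℝ → ℝ} {a b k A : ℝ} (hk : 0 < k) (hab : a ≤ b)
    (hG0 : ∀ x ∈ Icc a b, 0 ≤ G x) (hG : ∀ x ∈ Icc a b, G x ≤ A * exp (-(k * x))) :
    ∫ x in a..b, G x ≤ A * exp (-(k * a)) / k := by
  have ha : a ∈ Icc a b := left_mem_Icc.2 hab
  have hA : 0 ≤ A := nonneg_of_mul_nonneg_left ((hG0 a ha).trans (hG a ha)) (exp_pos _)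
  calc ∫ x in a..b, G x ≤ ∫ x in a..b, A * exp (-(k * x)) :=
        intervalIntegral.integral_mono_on_of_nonneg hab hG0 hG
          (Continuous.intervalIntegrable (by fun_prop) _ _)
    _ = A * ((exp (-(k * a)) - exp (-(k * b))) / k) := by
        rw [intervalIntegral.integral_const_mul, integral_exp_neg_mul hk.ne']
    _ ≤ A * exp (-(k * a)) / k := by
        rw [mul_div_assoc]
        gcongr
        linarith [exp_pos (-(k * b))]

theorem integral_integral_le_of_le_exp_mul {H : ℝ → ℝ → ℝ} {g : ℝ → ℝ} {a b k : ℝ}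
    (hk : 0 < k) (hab : a ≤ b) (hg : ContinuousOn g (Icc a b))
    (hH0 : ∀ u ∈ Icc a b, ∀ s ∈ Icc u b, 0 ≤ H u s)
    (hH : ∀ u ∈ Icc a b, ∀ s ∈ Icc u b, H u s ≤ exp (k * u) * (g s * exp (-(k * s)))) :
    ∫ u in a..b, ∫ s in u..b, H u s ≤ (∫ s in a..b, g s) / k := by
  set P : ℝ → ℝ := fun u => ∫ s in u..b, g s * exp (-(k * s)) with hP
  have hge : ContinuousOn (fun s => g s * exp (-(k * s))) (Icc a b) := hg.mul (by fun_prop)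
  have hPcont : ContinuousOn P (Icc a b) := by
    rw [← uIcc_of_le hab] at hge ⊢
    exact intervalIntegral.continuousOn_primitive_interval_left hge.integrableOn_Icc
  have hPa : 0 ≤ P a := intervalIntegral.integral_nonneg hab fun s hs =>
    have ha : a ∈ Icc a b := left_mem_Icc.2 hab
    nonneg_of_mul_nonneg_right ((hH0 a ha s hs).trans (hH a ha s hs)) (exp_pos _)
  have hdouble : ∫ u in a..b, ∫ s in u..b, H u s ≤ ∫ u in a..b, P u * exp (k * u) := by
    refine intervalIntegral.integral_mono_on_of_nonneg hab
      (fun u hu => intervalIntegral.integral_nonneg hu.2 (hH0 u hu)) (fun u hu => ?_)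
      ((hPcont.mul (by fun_prop)).intervalIntegrable_of_Icc hab)
    rw [hP, ← intervalIntegral.integral_mul_const]
    exact intervalIntegral.integral_mono_on_of_nonneg hu.2 (hH0 u hu)
      (fun s hs => (hH u hu s hs).trans_eq (mul_comm _ _))
      (((hge.mono (Icc_subset_Icc_left hu.1)).mul continuousOn_const).intervalIntegrable_of_Icc
        hu.2)
  have hderiv : ∀ x ∈ Ioo (min a b) (max a b), HasDerivAt P (-(g x * exp (-(k * x)))) x := by
    intro x hx
    rw [min_eq_left hab, max_eq_right hab] at hx
    have hcont : ContinuousAt (fun s => g s * exp (-(k * s))) x :=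
      hge.continuousAt (Icc_mem_nhds hx.1 hx.2)
    exact intervalIntegral.integral_hasDerivAt_left
      ((hge.mono (Icc_subset_Icc_left hx.1.le)).intervalIntegrable_of_Icc hx.2.le)
      ((hge.mono Ioo_subset_Icc_self).stronglyMeasurableAtFilter isOpen_Ioo x hx) hcont
  have hparts := intervalIntegral.integral_mul_deriv_eq_deriv_mul_of_hasDerivAt
    (v := fun x => exp (k * x) / k) (v' := fun x => exp (k * x))
    (by rwa [uIcc_of_le hab]) (by fun_prop) hderiv
    (fun x _ => by
      simpa [hk.ne'] using ((hasDerivAt_id x).const_mul k).exp.div_const k)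
    ((hge.neg).intervalIntegrable_of_Icc hab) (Continuous.intervalIntegrable (by fun_prop) _ _)
  have hlast : ∫ x in a..b, -(g x * exp (-(k * x))) * (exp (k * x) / k)
      = -((∫ s in a..b, g s) / k) := by
    rw [← intervalIntegral.integral_div, ← intervalIntegral.integral_neg]
    refine intervalIntegral.integral_congr fun x _ => ?_
    rw [exp_neg]
    field_simp
  have hPb : P b = 0 := intervalIntegral.integral_same
  rw [hparts, hlast, hPb] at hdouble
  have : 0 ≤ P a * (exp (k * a) / k) := by positivity
  linarith

theorem rpow_le_max_one_rpow {r t p : ℝ} (hr : 1 ≤ r) (hrt : r ≤ t) : r ^ p ≤ max 1 (t ^ p) := by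
  rcases le_total p 0 with hp | hp
  · exact le_max_of_le_left (rpow_le_one_of_one_le_of_nonpos hr hp)
  · exact le_max_of_le_right (rpow_le_rpow (by linarith) hrt hp)

section I2Estimate

variable {a c C t u s w : ℝ}

theorem integral_I2_integrand_le (hC : 0 < C) (hs : 0 ≤ s) (hw : 1 ≤ w) (hwt : w ≤ t) :
    ∫ r in w..t, (r ^ (2 * c - 2) * s ^ (2 * c - 2) / w) *
        exp (-2 * C * r + 2 * C * u - C * s + C * w)
      ≤ max 1 (t ^ (2 * c - 2)) * s ^ (2 * c - 2) * exp (2 * C * u - C * s) / (2 * C) *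
          (w⁻¹ * exp (-(C * w))) := by
  set M := max 1 (t ^ (2 * c - 2))
  set E := exp (2 * C * u - C * s + C * w)
  have hw0 : 0 ≤ w := by linarith
  have hsplit (r : ℝ) : (r ^ (2 * c - 2) * s ^ (2 * c - 2) / w) *
      exp (-2 * C * r + 2 * C * u - C * s + C * w)
        = r ^ (2 * c - 2) * (s ^ (2 * c - 2) / w * E) * exp (-(2 * C * r)) := by
    rw [show -2 * C * r + 2 * C * u - C * s + C * w
      = (2 * C * u - C * s + C * w) + -(2 * C * r) by ring, exp_add]
    ring
  have hexp : E * exp (-(2 * C * w)) = exp (2 * C * u - C * s) * exp (-(C * w)) := by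
    rw [← exp_add, ← exp_add]; ring_nf
  rw [intervalIntegral.integral_congr fun r _ => hsplit r]
  calc _ ≤ M * (s ^ (2 * c - 2) / w * E) * exp (-(2 * C * w)) / (2 * C) := by
        refine integral_le_of_le_mul_exp_neg (by positivity) hwt (fun r hr => ?_) (fun r hr => ?_)
        · have : 0 ≤ r := by linarith [hr.1]
          positivity
        · gcongr
          exact rpow_le_max_one_rpow (hw.trans hr.1) hr.2
    _ = _ := by linear_combination M * (s ^ (2 * c - 2) / w) / (2 * C) * hexp

theorem integral_integral_I2_integrand_le (hC : 0 < C) (hs : 1 ≤ s) (hst : s ≤ t) :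
    ∫ w in s..t, ∫ r in w..t, (r ^ (2 * c - 2) * s ^ (2 * c - 2) / w) *
        exp (-2 * C * r + 2 * C * u - C * s + C * w)
      ≤ exp (2 * C * u) *
          (max 1 (t ^ (2 * c - 2)) / (2 * C ^ 2) * s ^ (2 * c - 3) * exp (-(2 * C * s))) := by
  set B := max 1 (t ^ (2 * c - 2)) * s ^ (2 * c - 2) * exp (2 * C * u - C * s) / (2 * C)
  have hs0 : 0 < s := by linarith
  have hrpow : s ^ (2 * c - 3) = s ^ (2 * c - 2) * s⁻¹ := by
    rw [show 2 * c - 3 = 2 * c - 2 - 1 by ring, rpow_sub_one hs0.ne', div_eq_mul_inv]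
  have hexp : exp (2 * C * u - C * s) * exp (-(C * s)) = exp (2 * C * u) * exp (-(2 * C * s)) := by
    rw [← exp_add, ← exp_add]; ring_nf
  calc _ ≤ B * s⁻¹ * exp (-(C * s)) / C := by
        refine integral_le_of_le_mul_exp_neg hC hst (fun w hw => ?_) (fun w hw => ?_)
        · refine intervalIntegral.integral_nonneg hw.2 fun r hr => ?_
          have : 0 ≤ r := by linarith [hr.1, hw.1]
          have : 0 ≤ w := by linarith [hw.1]
          positivity
        · calc _ ≤ B * (w⁻¹ * exp (-(C * w))) :=
                integral_I2_integrand_le hC hs0.le (hs.trans hw.1) hw.2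
            _ ≤ B * (s⁻¹ * exp (-(C * w))) := by gcongr; exact hw.1
            _ = B * s⁻¹ * exp (-(C * w)) := by ring
    _ = _ := by
      rw [hrpow]
      linear_combination max 1 (t ^ (2 * c - 2)) * s ^ (2 * c - 2) * s⁻¹ / (2 * C ^ 2) * hexp

theorem I2_le (hC : 0 < C) (ha : 1 ≤ a) (hat : a ≤ t) :
    I2 c C a t ≤
      t ^ (-(4 * c)) * (max 1 (t ^ (2 * c - 2)) / (4 * C ^ 3) * ∫ u in a..t, u ^ (2 * c - 3)) := by
  set M := max 1 (t ^ (2 * c - 2))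
  have hg : ContinuousOn (fun s => M / (2 * C ^ 2) * s ^ (2 * c - 3)) (Icc a t) :=
    continuousOn_const.mul (continuousOn_id.rpow_const fun x hx =>
      Or.inl (by linarith [hx.1] : (0 : ℝ) < x).ne')
  refine mul_le_mul_of_nonneg_left ?_ (rpow_nonneg (by linarith) _)
  calc _ ≤ (∫ s in a..t, M / (2 * C ^ 2) * s ^ (2 * c - 3)) / (2 * C) := by
        refine integral_integral_le_of_le_exp_mul (by positivity) hat hg
          (fun u hu s hs => ?_) (fun u hu s hs => ?_)
        · refine intervalIntegral.integral_nonneg hs.2 fun w hw => ?_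
          refine intervalIntegral.integral_nonneg hw.2 fun r hr => ?_
          have : 0 ≤ s := by linarith [hs.1, hu.1]
          have : 0 ≤ w := by linarith [hw.1]
          have : 0 ≤ r := by linarith [hr.1]
          positivity
        · exact integral_integral_I2_integrand_le hC (ha.trans (hu.1.trans hs.1)) hs.2
    _ = _ := by
      rw [intervalIntegral.integral_const_mul]
      ring

theorem I2_le_of_one_lt (hC : 0 < C) (ha : 1 ≤ a) (hat : a ≤ t) (hc : 1 < c) :
    I2 c C a t ≤ (2 * c - 2)⁻¹ / (4 * C ^ 3) / t ^ 4 := by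
  have ht : 0 < t := by linarith
  have hp : 0 < 2 * c - 2 := by linarith
  have hM : max 1 (t ^ (2 * c - 2)) = t ^ (2 * c - 2) :=
    max_eq_right (one_le_rpow (ha.trans hat) hp.le)
  have hJ : ∫ u in a..t, u ^ (2 * c - 3) ≤ t ^ (2 * c - 2) / (2 * c - 2) := by
    rw [integral_rpow (Or.inl (by linarith)), show 2 * c - 3 + 1 = 2 * c - 2 by ring]
    have : 0 ≤ a ^ (2 * c - 2) := rpow_nonneg (by linarith) _
    gcongr
    linarith
  calc I2 c C a t
        ≤ t ^ (-(4 * c)) * (t ^ (2 * c - 2) / (4 * C ^ 3) * (t ^ (2 * c - 2) / (2 * c - 2))) := by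
        refine (I2_le hC ha hat).trans ?_
        rw [hM]
        gcongr
    _ = (2 * c - 2)⁻¹ / (4 * C ^ 3) * (t ^ (-(4 * c)) * t ^ (2 * c - 2) * t ^ (2 * c - 2)) := by
        ring
    _ = (2 * c - 2)⁻¹ / (4 * C ^ 3) / t ^ 4 := by
        rw [← rpow_add ht, ← rpow_add ht, show -(4 * c) + (2 * c - 2) + (2 * c - 2) = -4 by ring,
          rpow_neg ht.le, div_eq_mul_inv]
        norm_cast

theorem I2_le_of_eq_one (hC : 0 < C) (ha : 1 ≤ a) (hat : a ≤ t) (hc : c = 1) :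
    I2 c C a t ≤ log t / (4 * C ^ 3) / t ^ 4 := by
  subst hc
  have ht : 0 < t := by linarith
  have hJ : ∫ u in a..t, u ^ (2 * (1 : ℝ) - 3) ≤ log t := by
    rw [show 2 * (1 : ℝ) - 3 = -1 by norm_num,
      intervalIntegral.integral_congr fun u _ => rpow_neg_one u,
      integral_inv (notMem_uIcc_of_lt (by linarith) ht), log_div ht.ne' (by linarith)]
    linarith [log_nonneg ha]
  calc I2 1 C a t ≤ t ^ (-(4 * (1 : ℝ))) * (1 / (4 * C ^ 3) * log t) := by
        refine (I2_le hC ha hat).trans ?_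
        rw [show 2 * (1 : ℝ) - 2 = 0 by norm_num, rpow_zero, max_self]
        gcongr
    _ = log t / (4 * C ^ 3) / t ^ 4 := by
        rw [show -(4 * (1 : ℝ)) = -4 by norm_num, rpow_neg ht.le]
        norm_cast
        ring

theorem I2_le_of_lt_one (hC : 0 < C) (ha : 1 ≤ a) (hat : a ≤ t) (hc : c < 1) :
    I2 c C a t ≤ (2 - 2 * c)⁻¹ / (4 * C ^ 3) / t ^ (4 * c) := by
  have ht : 0 < t := by linarith
  have hp : 2 * c - 2 < 0 := by linarith
  have hM : max 1 (t ^ (2 * c - 2)) = 1 :=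
    max_eq_left (rpow_le_one_of_one_le_of_nonpos (ha.trans hat) hp.le)
  have hJ : ∫ u in a..t, u ^ (2 * c - 3) ≤ (2 - 2 * c)⁻¹ := by
    rw [integral_rpow (Or.inr ⟨by linarith, notMem_uIcc_of_lt (by linarith) ht⟩),
      show 2 * c - 3 + 1 = 2 * c - 2 by ring]
    have h1 : a ^ (2 * c - 2) ≤ 1 := rpow_le_one_of_one_le_of_nonpos ha hp.le
    have h2 : 0 ≤ t ^ (2 * c - 2) := rpow_nonneg ht.le _
    calc (t ^ (2 * c - 2) - a ^ (2 * c - 2)) / (2 * c - 2)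
        = (a ^ (2 * c - 2) - t ^ (2 * c - 2)) * (2 - 2 * c)⁻¹ := by
          rw [← div_eq_mul_inv, div_eq_div_iff hp.ne (by linarith)]; ring
      _ ≤ (2 - 2 * c)⁻¹ := mul_le_of_le_one_left (inv_nonneg.2 (by linarith)) (by linarith)
  calc I2 c C a t ≤ t ^ (-(4 * c)) * (1 / (4 * C ^ 3) * (2 - 2 * c)⁻¹) := by
        refine (I2_le hC ha hat).trans ?_
        rw [hM]
        gcongr
    _ = (2 - 2 * c)⁻¹ / (4 * C ^ 3) / t ^ (4 * c) := by
        rw [rpow_neg ht.le]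
        ring

end I2Estimate

theorem stmt_2_general (c Cstar tstar : ℝ) (hC : 0 < Cstar)
    (htstar : 1 ≤ tstar) :
    ∃ K : ℝ, 0 < K ∧ ∀ t : ℝ, tstar ≤ t →
      (1 < c → I2 c Cstar tstar t ≤ K / t ^ 4) ∧
      (c = 1 → I2 c Cstar tstar t ≤ K * (1 + Real.log t) / t ^ 4) ∧
      (c < 1 → I2 c Cstar tstar t ≤ K / t ^ (4 * c)) := by
  refine ⟨(1 + |2 * c - 2|⁻¹) / (4 * Cstar ^ 3), by positivity,
    fun t ht => ⟨fun hc => ?_, fun hc => ?_, fun hc => ?_⟩⟩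
  · refine (I2_le_of_one_lt hC htstar ht hc).trans ?_
    gcongr
    rw [abs_of_pos (by linarith)]
    linarith
  · refine (I2_le_of_eq_one hC htstar ht hc).trans ?_
    have hlog : 0 ≤ log t := log_nonneg (htstar.trans ht)
    rw [hc, show |2 * (1 : ℝ) - 2|⁻¹ = 0 by norm_num, add_zero, div_mul_eq_mul_div, one_mul]
    gcongr
    linarith
  · refine (I2_le_of_lt_one hC htstar ht hc).trans ?_
    have : 0 < t := by linarith
    gcongr
    rw [abs_of_neg (by linarith), neg_sub]
    linarith

/-- Lemma 5.4 of the paper. -/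
theorem stmt_2 (c Cstar tstar : ℝ) (hc : 1 / 2 < c) (hC : 0 < Cstar)
    (htstar : 1 ≤ tstar) :
    ∃ K : ℝ, 0 < K ∧ ∀ t : ℝ, tstar ≤ t →
      (1 < c → I2 c Cstar tstar t ≤ K / t ^ 4) ∧
      (c = 1 → I2 c Cstar tstar t ≤ K * (1 + Real.log t) / t ^ 4) ∧
      (c < 1 → I2 c Cstar tstar t ≤ K / t ^ (4 * c)) :=
  stmt_2_general c Cstar tstar hC htstar
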